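/- Let n ≥ 2 and let A ∈ ℝ^{n×n} be symmetric satisfying condition (M) for the nonnegative orthant ℝ^n₊ := {x ∈ ℝ^n : x_i ≥ 0 for all i}. Then all diagonal entries of A are equal (A_{ii} = A_{jj} for all i, j) and all off-diagonal entries of A are nonpositive (A_{ij} ≤ 0 for all i ≠ j), i.e., A = λ I_n + B where λ ∈ ℝ and B is a Z-matrix with zero diagonal. -/
import Mathlib


open Matrix RealInnerProductSpace

/-- Condition (M): `⟨Ax,x⟩ ≥ ⟨Ay,y⟩` for all `x ∈ 𝕊` and `y ∈ K ∩ 𝕊` with `x ⊥ y`. -/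
def CondM {n : ℕ} (A : Matrix (Fin n) (Fin n) ℝ) (K : Set (EuclideanSpace ℝ (Fin n))) : Prop :=
  ∀ x y : EuclideanSpace ℝ (Fin n), ‖x‖ = 1 → y ∈ K → ‖y‖ = 1 → ⟪x, y⟫ = 0 →
    ⟪Matrix.toEuclideanLin A y, y⟫ ≤ ⟪Matrix.toEuclideanLin A x, x⟫

lemma inner_toEuclideanLin_single {n : ℕ} (A : Matrix (Fin n) (Fin n) ℝ) (i j : Fin n) :
    ⟪Matrix.toEuclideanLin A (EuclideanSpace.single j (1:ℝ)), EuclideanSpace.single i (1:ℝ)⟫ = A i j := by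
  simp [Matrix.toEuclideanLin_apply, EuclideanSpace.inner_single_right, Matrix.mulVec,
    dotProduct, EuclideanSpace.single_apply]

lemma inner_single_single' {n : ℕ} (i j : Fin n) :
    ⟪(EuclideanSpace.single i (1:ℝ)), EuclideanSpace.single j (1:ℝ)⟫ = if i = j then 1 else 0 := by
  simp [EuclideanSpace.inner_single_right, EuclideanSpace.single_apply, eq_comm]

/-- For `n ≥ 2` and symmetric `A` satisfying condition (M) for the nonnegative
orthant: all diagonal entries of `A` are equal and all off-diagonal entries are
nonpositive. -/
theorem quadratic_spherical_stmt12 (n : ℕ) (hn : 2 ≤ n)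
    (A : Matrix (Fin n) (Fin n) ℝ) (hA : A.IsSymm)
    (hM : CondM A {x : EuclideanSpace ℝ (Fin n) | ∀ i, 0 ≤ x i}) :
    (∀ i j : Fin n, A i i = A j j) ∧ (∀ i j : Fin n, i ≠ j → A i j ≤ 0) := by
  set E : Fin n → EuclideanSpace ℝ (Fin n) := fun i => EuclideanSpace.single i (1:ℝ) with hE
  have hnormE : ∀ i, ‖E i‖ = 1 := by intro i; simp [hE]
  have hmemE : ∀ i, E i ∈ {x : EuclideanSpace ℝ (Fin n) | ∀ i, 0 ≤ x i} := by
    intro i k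
    simp only [hE, EuclideanSpace.single_apply]
    positivity
  have hsym : ∀ i j, A j i = A i j := fun i j => by
    conv_lhs => rw [← hA]
    rfl
  -- diagonal comparison
  have hdiag : ∀ i j : Fin n, i ≠ j → A j j ≤ A i i := by
    intro i j hij
    have h := hM (E i) (E j) (hnormE i) (hmemE j) (hnormE j)
      (by simp [hE, inner_single_single', hij, Ne.symm hij])
    rwa [inner_toEuclideanLin_single, inner_toEuclideanLin_single] at h
  constructor
  · intro i j
    rcases eq_or_ne i j with rfl | hij
    · rfl
    · exact le_antisymm (hdiag j i hij.symm) (hdiag i j hij)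
  · intro i j hij
    set c : ℝ := (Real.sqrt 2)⁻¹ with hc
    have hc2 : c * c = 1/2 := by
      rw [hc, ← mul_inv]
      rw [← Real.sqrt_mul_self (by norm_num : (0:ℝ) ≤ 2)]
      norm_num
    have hcpos : 0 ≤ c := by positivity
    set v : EuclideanSpace ℝ (Fin n) := c • (E i + E j) with hv
    set w : EuclideanSpace ℝ (Fin n) := c • (E i - E j) with hw
    have hvv : ⟪v, v⟫ = 1 := by
      simp only [hv, inner_smul_left, inner_smul_right, inner_add_left, inner_add_right,
        RCLike.conj_to_real, hE, inner_single_single', hij, Ne.symm hij]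
      simp only [if_true, if_false]
      nlinarith [hc2]
    have hww : ⟪w, w⟫ = 1 := by
      simp only [hw, inner_smul_left, inner_smul_right, inner_sub_left, inner_sub_right,
        RCLike.conj_to_real, hE, inner_single_single', hij, Ne.symm hij]
      simp only [if_true, if_false]
      nlinarith [hc2]
    have hnv : ‖v‖ = 1 := by
      have := real_inner_self_eq_norm_sq v
      nlinarith [norm_nonneg v]
    have hnw : ‖w‖ = 1 := by
      have := real_inner_self_eq_norm_sq w
      nlinarith [norm_nonneg w]
    have hvmem : v ∈ {x : EuclideanSpace ℝ (Fin n) | ∀ i, 0 ≤ x i} := by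
      intro k
      have : v k = c * ((E i) k + (E j) k) := rfl
      rw [this]
      have h1 := hmemE i k
      have h2 := hmemE j k
      positivity
    have horth : ⟪w, v⟫ = 0 := by
      simp only [hw, hv, inner_smul_left, inner_smul_right, inner_add_right, inner_sub_left,
        RCLike.conj_to_real, hE, inner_single_single', hij, Ne.symm hij]
      ring
    have h := hM w v hnw hvmem hnv horth
    have hqv : ⟪Matrix.toEuclideanLin A v, v⟫ = (1/2) * (A i i + A i j + A j i + A j j) := by
      simp only [hv, _root_.map_smul, map_add, inner_smul_left, inner_smul_right, inner_add_left,
        inner_add_right, RCLike.conj_to_real, hE, inner_toEuclideanLin_single]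
      linear_combination (A i i + A i j + A j i + A j j) * hc2
    have hqw : ⟪Matrix.toEuclideanLin A w, w⟫ = (1/2) * (A i i - A i j - A j i + A j j) := by
      simp only [hw, _root_.map_smul, map_sub, inner_smul_left, inner_smul_right, inner_sub_left,
        inner_sub_right, RCLike.conj_to_real, hE, inner_toEuclideanLin_single]
      linear_combination (A i i - A i j - A j i + A j j) * hc2
    rw [hqv, hqw] at h
    have := hsym i j
    linarith
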